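/- Let ρ_AB be a density matrix on ℂ^m⊗ℂ^n and ρ_CD a density matrix on ℂ^u⊗ℂ^v, and let U_A, U_B, U_C, U_D be unitary matrices on ℂ^m, ℂ^n, ℂ^u, ℂ^v respectively. Set ρ'_AB = (U_A⊗U_B) ρ_AB (U_A⊗U_B)† and ρ'_CD = (U_C⊗U_D) ρ_CD (U_C⊗U_D)†. Then N_H^b(ρ'_AB⊗ρ'_CD) = N_H^b(ρ_AB⊗ρ_CD). -/

import Mathlib

open scoped Matrix Kronecker BigOperators ComplexOrder
open Matrix

/-- The positive-semidefinite square root of a PSD matrix (0 if not PSD). -/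
noncomputable def psdSqrt {N : Type*} [Fintype N] [DecidableEq N] (A : Matrix N N ℂ) :
    Matrix N N ℂ :=
  open scoped Classical in
  if h : A.PosSemidef then
    (h.1.eigenvectorUnitary : Matrix N N ℂ) *
      Matrix.diagonal ((↑) ∘ Real.sqrt ∘ h.1.eigenvalues) *
        (star h.1.eigenvectorUnitary : Matrix N N ℂ)
  else 0

/-- Squared Frobenius (Hilbert–Schmidt) norm: `‖X‖² = tr (Xᴴ X)`. -/
noncomputable def hsNormSq {N : Type*} [Fintype N] (X : Matrix N N ℂ) : ℝ :=
  (Matrix.trace (Xᴴ * X)).re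

/-- A density matrix: positive semidefinite with unit trace. -/
def IsDensity {N : Type*} [Fintype N] [DecidableEq N] (ρ : Matrix N N ℂ) : Prop :=
  ρ.PosSemidef ∧ ρ.trace = 1

/-- Standard inner product on `ℂ^N`. -/
noncomputable def cInner {N : Type*} [Fintype N] (x y : N → ℂ) : ℂ :=
  ∑ i, star (x i) * y i

/-- Outer product `ψ ψ†`. -/
noncomputable def outer {N : Type*} (ψ : N → ℂ) : Matrix N N ℂ :=
  Matrix.vecMulVec ψ (star ψ)

/-- The family of unit vectors of a rank-one von Neumann measurement: an orthonormal basis,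
indexed by the dimension. -/
def IsVNM {N : Type*} [Fintype N] [DecidableEq N] (u : N → N → ℂ) : Prop :=
  ∀ a b, cInner (u a) (u b) = if a = b then (1 : ℂ) else 0

/-- The rank-one projection `Π_h = u_h u_h†` of a measurement. -/
noncomputable def projOf {N : Type*} (u : N → N → ℂ) (h : N) : Matrix N N ℂ :=
  outer (u h)

/-- The measurement `{u_h u_h†}` fixes `σ`: `Σ_h Π_h σ Π_h = σ`. -/
def FixesVNM {N : Type*} [Fintype N] (u : N → N → ℂ) (σ : Matrix N N ℂ) : Prop :=
  ∑ h, projOf u h * σ * projOf u h = σ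

/-- Reduced state of the second factor: `(ρ_B)_{j j'} = Σ_i ρ_{(i,j),(i,j')}`. -/
noncomputable def redB {m n : ℕ} (ρ : Matrix (Fin m × Fin n) (Fin m × Fin n) ℂ) :
    Matrix (Fin n) (Fin n) ℂ :=
  Matrix.of fun j j' => ∑ i, ρ (i, j) (i, j')

/-- Reduced state of the first factor: `(ρ_C)_{k k'} = Σ_l ρ_{(k,l),(k',l)}`. -/
noncomputable def redC {u v : ℕ} (ρ : Matrix (Fin u × Fin v) (Fin u × Fin v) ℂ) :
    Matrix (Fin u) (Fin u) ℂ :=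
  Matrix.of fun k k' => ∑ l, ρ (k, l) (k', l)

/-- `I_m ⊗ P ⊗ I_v` acting on the middle two factors. -/
noncomputable def ampMid (m v : ℕ) {n u : ℕ} (P : Matrix (Fin n × Fin u) (Fin n × Fin u) ℂ) :
    Matrix ((Fin m × Fin n) × Fin u × Fin v) ((Fin m × Fin n) × Fin u × Fin v) ℂ :=
  Matrix.of fun p q =>
    (if p.1.1 = q.1.1 then (1 : ℂ) else 0) * P (p.1.2, p.2.1) (q.1.2, q.2.1) *
      (if p.2.2 = q.2.2 then (1 : ℂ) else 0)

/-- The map `Π^{BC}(X) = Σ_h (I_m ⊗ Π_h ⊗ I_v) X (I_m ⊗ Π_h ⊗ I_v)`. -/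
noncomputable def pinchBC {m n u v : ℕ} (w : (Fin n × Fin u) → (Fin n × Fin u) → ℂ)
    (X : Matrix ((Fin m × Fin n) × Fin u × Fin v) ((Fin m × Fin n) × Fin u × Fin v) ℂ) :
    Matrix ((Fin m × Fin n) × Fin u × Fin v) ((Fin m × Fin n) × Fin u × Fin v) ℂ :=
  ∑ h, ampMid m v (projOf w h) * X * ampMid m v (projOf w h)

/-- The measurement-induced nonbilocality `N_H^b(ρ_AB ⊗ ρ_CD)`. -/
noncomputable def NHb {m n u v : ℕ}
    (ρAB : Matrix (Fin m × Fin n) (Fin m × Fin n) ℂ)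
    (ρCD : Matrix (Fin u × Fin v) (Fin u × Fin v) ℂ) : ℝ :=
  sSup { r : ℝ | ∃ w : (Fin n × Fin u) → (Fin n × Fin u) → ℂ,
    IsVNM w ∧ FixesVNM w (redB ρAB ⊗ₖ redC ρCD) ∧
    r = hsNormSq (psdSqrt (ρAB ⊗ₖ ρCD) - pinchBC w (psdSqrt (ρAB ⊗ₖ ρCD))) }

/-!
Conjugating `ρ_AB ⊗ ρ_CD` by the local unitary `W = (U_A ⊗ U_B) ⊗ (U_C ⊗ U_D)` conjugates its
square root by `W`, because the continuous functional calculus commutes with unitary conjugation.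
The partial traces absorb `U_A` and `U_D`, so `ρ_B ⊗ ρ_C` is conjugated by `V = U_B ⊗ U_C`.
Rotating a measurement basis by `V` therefore turns measurements fixing `ρ_B ⊗ ρ_C` into
measurements fixing the new reduced state, and since `W (I ⊗ Π_h ⊗ I) W† = I ⊗ V Π_h V† ⊗ I`, the
measured operator is conjugated by `W` as well. The Hilbert–Schmidt norm is unitarily invariant,
so both suprema are taken over the same set of values.
-/

open Matrix

section UnitaryConj
variable {N : Type*} [Fintype N] [DecidableEq N]

lemma psdSqrt_eq_cfc {A : Matrix N N ℂ} (hA : A.PosSemidef) : psdSqrt A = cfc Real.sqrt A := by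
  rw [psdSqrt, dif_pos hA, hA.1.cfc_eq]
  rfl

lemma psdSqrt_unitary_conj {U : Matrix N N ℂ} (hU : U ∈ unitaryGroup N ℂ) (A : Matrix N N ℂ) :
    psdSqrt (U * A * Uᴴ) = U * psdSqrt A * Uᴴ := by
  have hPSD : (U * A * Uᴴ).PosSemidef ↔ A.PosSemidef :=
    (Unitary.isUnit_coe (U := ⟨U, hU⟩)).posSemidef_star_right_conjugate_iff
  by_cases hA : A.PosSemidef
  · rw [psdSqrt_eq_cfc hA, psdSqrt_eq_cfc (hPSD.2 hA)]
    exact (StarAlgHomClass.map_cfc (S := ℂ) (Unitary.conjStarAlgAut ℂ _ ⟨U, hU⟩) Real.sqrt A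
      (hφ := (continuous_const.matrix_mul continuous_id).matrix_mul continuous_const)
      (ha := hA.1) (hφa := (hPSD.2 hA).1)).symm
  · rw [psdSqrt, dif_neg (hPSD.not.2 hA), psdSqrt, dif_neg hA, mul_zero, zero_mul]

lemma hsNormSq_unitary_conj {U : Matrix N N ℂ} (hU : U ∈ unitaryGroup N ℂ) (X : Matrix N N ℂ) :
    hsNormSq (U * X * Uᴴ) = hsNormSq X := by
  have hUU : Uᴴ * U = 1 := hU.1
  have h : (U * X * Uᴴ)ᴴ * (U * X * Uᴴ) = U * (Xᴴ * X) * Uᴴ := by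
    simp only [conjTranspose_mul, conjTranspose_conjTranspose, mul_assoc]
    rw [← mul_assoc Uᴴ U, hUU, one_mul]
  rw [hsNormSq, hsNormSq, h, trace_mul_cycle, hUU, one_mul]

lemma IsVNM.unitary_mulVec {U : Matrix N N ℂ} (hU : U ∈ unitaryGroup N ℂ) {w : N → N → ℂ}
    (hw : IsVNM w) : IsVNM fun h => U *ᵥ w h := by
  intro a b
  rw [← hw a b]
  change star (U *ᵥ w a) ⬝ᵥ (U *ᵥ w b) = star (w a) ⬝ᵥ w b
  rw [star_mulVec, ← dotProduct_mulVec, mulVec_mulVec, show Uᴴ * U = 1 from hU.1, one_mulVec]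

omit [DecidableEq N] in
lemma projOf_mulVec (U : Matrix N N ℂ) (w : N → N → ℂ) (h : N) :
    projOf (fun h => U *ᵥ w h) h = U * projOf w h * Uᴴ := by
  rw [projOf, projOf, outer, outer, star_mulVec, mul_vecMulVec, vecMulVec_mul]

lemma FixesVNM.unitary_conj {U : Matrix N N ℂ} (hU : U ∈ unitaryGroup N ℂ) {w : N → N → ℂ}
    {σ : Matrix N N ℂ} (hw : FixesVNM w σ) : FixesVNM (fun h => U *ᵥ w h) (U * σ * Uᴴ) := by
  have hUU : Uᴴ * U = 1 := hU.1
  unfold FixesVNM at hw ⊢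
  conv_rhs => rw [← hw]
  simp only [projOf_mulVec, Finset.mul_sum, Finset.sum_mul, mul_assoc, ← mul_assoc Uᴴ U, hUU,
    one_mul]

end UnitaryConj

lemma redB_kronecker_conj {m n : ℕ} (ρ : Matrix (Fin m × Fin n) (Fin m × Fin n) ℂ)
    {A : Matrix (Fin m) (Fin m) ℂ} (hA : Aᴴ * A = 1) (B : Matrix (Fin n) (Fin n) ℂ) :
    redB ((A ⊗ₖ B) * ρ * (A ⊗ₖ B)ᴴ) = B * redB ρ * Bᴴ := by
  have hA' : ∀ a a', ∑ i, A i a * star (A i a') = if a' = a then 1 else 0 := fun a a' => by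
    simpa [mul_apply, one_apply, mul_comm] using congrFun (congrFun hA a') a
  ext j j'
  calc ∑ i, ((A ⊗ₖ B) * ρ * (A ⊗ₖ B)ᴴ) (i, j) (i, j')
      = ∑ y, ∑ x, (∑ i, A i x.1 * star (A i y.1)) * (B j x.2 * ρ x y * star (B j' y.2)) := by
        simp only [mul_apply, conjTranspose_apply, kroneckerMap_apply, Finset.sum_mul, star_mul']
        rw [Finset.sum_comm]
        refine Finset.sum_congr rfl fun y _ => ?_
        rw [Finset.sum_comm]
        refine Finset.sum_congr rfl fun x _ => Finset.sum_congr rfl fun i _ => by ring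
    _ = (B * redB ρ * Bᴴ) j j' := by
        simp only [hA', redB, mul_apply, of_apply, conjTranspose_apply, Fintype.sum_prod_type,
          ite_mul, zero_mul, one_mul, Finset.sum_mul, Finset.mul_sum]
        simp only [Finset.sum_comm (s := (Finset.univ : Finset (Fin m)))
          (t := (Finset.univ : Finset (Fin n))), Finset.sum_ite_eq, Finset.mem_univ, if_true]

lemma redC_kronecker_conj {u v : ℕ} (ρ : Matrix (Fin u × Fin v) (Fin u × Fin v) ℂ)
    (C : Matrix (Fin u) (Fin u) ℂ) {D : Matrix (Fin v) (Fin v) ℂ} (hD : Dᴴ * D = 1) :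
    redC ((C ⊗ₖ D) * ρ * (C ⊗ₖ D)ᴴ) = C * redC ρ * Cᴴ := by
  have hD' : ∀ d d', ∑ l, D l d * star (D l d') = if d' = d then 1 else 0 := fun d d' => by
    simpa [mul_apply, one_apply, mul_comm] using congrFun (congrFun hD d') d
  ext k k'
  calc ∑ l, ((C ⊗ₖ D) * ρ * (C ⊗ₖ D)ᴴ) (k, l) (k', l)
      = ∑ y, ∑ x, (∑ l, D l x.2 * star (D l y.2)) * (C k x.1 * ρ x y * star (C k' y.1)) := by
        simp only [mul_apply, conjTranspose_apply, kroneckerMap_apply, Finset.sum_mul, star_mul']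
        rw [Finset.sum_comm]
        refine Finset.sum_congr rfl fun y _ => ?_
        rw [Finset.sum_comm]
        refine Finset.sum_congr rfl fun x _ => Finset.sum_congr rfl fun l _ => by ring
    _ = (C * redC ρ * Cᴴ) k k' := by
        simp only [hD', redC, mul_apply, of_apply, conjTranspose_apply, Fintype.sum_prod_type,
          ite_mul, zero_mul, one_mul, Finset.sum_mul, Finset.mul_sum]
        simp only [Finset.sum_comm (s := (Finset.univ : Finset (Fin v)))
          (t := (Finset.univ : Finset (Fin u))), Finset.sum_ite_eq, Finset.mem_univ, if_true]

def prodAssocMid (a b c d : Type*) : (a × b) × c × d ≃ a × (b × c) × d :=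
  (Equiv.prodAssoc a b (c × d)).trans ((Equiv.refl a).prodCongr (Equiv.prodAssoc b c d).symm)

section Regroup
variable {m n u v : ℕ}

lemma kronecker_kronecker_eq_submatrix (A : Matrix (Fin m) (Fin m) ℂ)
    (B : Matrix (Fin n) (Fin n) ℂ) (C : Matrix (Fin u) (Fin u) ℂ) (D : Matrix (Fin v) (Fin v) ℂ) :
    (A ⊗ₖ B) ⊗ₖ (C ⊗ₖ D) =
      (A ⊗ₖ ((B ⊗ₖ C) ⊗ₖ D)).submatrix (prodAssocMid _ _ _ _) (prodAssocMid _ _ _ _) := by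
  ext ⟨⟨i, j⟩, k, l⟩ ⟨⟨i', j'⟩, k', l'⟩
  simp [prodAssocMid, mul_assoc]

lemma ampMid_eq_submatrix (P : Matrix (Fin n × Fin u) (Fin n × Fin u) ℂ) :
    ampMid m v P =
      ((1 : Matrix (Fin m) (Fin m) ℂ) ⊗ₖ (P ⊗ₖ (1 : Matrix (Fin v) (Fin v) ℂ))).submatrix
        (prodAssocMid _ _ _ _) (prodAssocMid _ _ _ _) := by
  ext ⟨⟨i, j⟩, k, l⟩ ⟨⟨i', j'⟩, k', l'⟩
  simp [ampMid, prodAssocMid, one_apply]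

lemma ampMid_kronecker_conj {A : Matrix (Fin m) (Fin m) ℂ} (hA : A * Aᴴ = 1)
    (B : Matrix (Fin n) (Fin n) ℂ) (C : Matrix (Fin u) (Fin u) ℂ)
    {D : Matrix (Fin v) (Fin v) ℂ} (hD : D * Dᴴ = 1)
    (P : Matrix (Fin n × Fin u) (Fin n × Fin u) ℂ) :
    (A ⊗ₖ B) ⊗ₖ (C ⊗ₖ D) * ampMid m v P * ((A ⊗ₖ B) ⊗ₖ (C ⊗ₖ D))ᴴ =
      ampMid m v ((B ⊗ₖ C) * P * (B ⊗ₖ C)ᴴ) := by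
  rw [kronecker_kronecker_eq_submatrix, ampMid_eq_submatrix, ampMid_eq_submatrix,
    conjTranspose_submatrix, submatrix_mul_equiv, submatrix_mul_equiv, conjTranspose_kronecker,
    conjTranspose_kronecker, ← mul_kronecker_mul, ← mul_kronecker_mul, ← mul_kronecker_mul,
    ← mul_kronecker_mul, mul_one, mul_one, hA, hD]

end Regroup

section LocalUnitary
variable {m n u v : ℕ} {A : Matrix (Fin m) (Fin m) ℂ} {B : Matrix (Fin n) (Fin n) ℂ}
  {C : Matrix (Fin u) (Fin u) ℂ} {D : Matrix (Fin v) (Fin v) ℂ}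

lemma pinchBC_kronecker_conj (hA : A ∈ unitaryGroup (Fin m) ℂ) (hB : B ∈ unitaryGroup (Fin n) ℂ)
    (hC : C ∈ unitaryGroup (Fin u) ℂ) (hD : D ∈ unitaryGroup (Fin v) ℂ)
    (w : Fin n × Fin u → Fin n × Fin u → ℂ)
    (S : Matrix ((Fin m × Fin n) × Fin u × Fin v) ((Fin m × Fin n) × Fin u × Fin v) ℂ) :
    pinchBC (fun h => (B ⊗ₖ C) *ᵥ w h) ((A ⊗ₖ B) ⊗ₖ (C ⊗ₖ D) * S * ((A ⊗ₖ B) ⊗ₖ (C ⊗ₖ D))ᴴ) =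
      (A ⊗ₖ B) ⊗ₖ (C ⊗ₖ D) * pinchBC w S * ((A ⊗ₖ B) ⊗ₖ (C ⊗ₖ D))ᴴ := by
  set W := (A ⊗ₖ B) ⊗ₖ (C ⊗ₖ D)
  have hW : Wᴴ * W = 1 :=
    (kronecker_mem_unitary (kronecker_mem_unitary hA hB) (kronecker_mem_unitary hC hD)).1
  have hamp (h) : ampMid m v (projOf (fun h => (B ⊗ₖ C) *ᵥ w h) h) =
      W * ampMid m v (projOf w h) * Wᴴ := by
    rw [projOf_mulVec, ampMid_kronecker_conj hA.2 B C hD.2]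
  simp only [pinchBC, hamp, Finset.mul_sum, Finset.sum_mul, mul_assoc, ← mul_assoc Wᴴ W, hW,
    one_mul]

lemma redB_kronecker_redC_conj (hA : A ∈ unitaryGroup (Fin m) ℂ)
    (hD : D ∈ unitaryGroup (Fin v) ℂ) (ρAB : Matrix (Fin m × Fin n) (Fin m × Fin n) ℂ)
    (ρCD : Matrix (Fin u × Fin v) (Fin u × Fin v) ℂ) :
    redB ((A ⊗ₖ B) * ρAB * (A ⊗ₖ B)ᴴ) ⊗ₖ redC ((C ⊗ₖ D) * ρCD * (C ⊗ₖ D)ᴴ) =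
      (B ⊗ₖ C) * (redB ρAB ⊗ₖ redC ρCD) * (B ⊗ₖ C)ᴴ := by
  rw [redB_kronecker_conj ρAB hA.1, redC_kronecker_conj ρCD C hD.1, mul_kronecker_mul,
    mul_kronecker_mul, conjTranspose_kronecker]

def NHbValues (ρAB : Matrix (Fin m × Fin n) (Fin m × Fin n) ℂ)
    (ρCD : Matrix (Fin u × Fin v) (Fin u × Fin v) ℂ) : Set ℝ :=
  { r : ℝ | ∃ w : (Fin n × Fin u) → (Fin n × Fin u) → ℂ,
    IsVNM w ∧ FixesVNM w (redB ρAB ⊗ₖ redC ρCD) ∧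
    r = hsNormSq (psdSqrt (ρAB ⊗ₖ ρCD) - pinchBC w (psdSqrt (ρAB ⊗ₖ ρCD))) }

lemma NHbValues_subset_kronecker_conj (hA : A ∈ unitaryGroup (Fin m) ℂ)
    (hB : B ∈ unitaryGroup (Fin n) ℂ) (hC : C ∈ unitaryGroup (Fin u) ℂ)
    (hD : D ∈ unitaryGroup (Fin v) ℂ) (ρAB : Matrix (Fin m × Fin n) (Fin m × Fin n) ℂ)
    (ρCD : Matrix (Fin u × Fin v) (Fin u × Fin v) ℂ) :
    NHbValues ρAB ρCD ⊆
      NHbValues ((A ⊗ₖ B) * ρAB * (A ⊗ₖ B)ᴴ) ((C ⊗ₖ D) * ρCD * (C ⊗ₖ D)ᴴ) := by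
  have hW := kronecker_mem_unitary (kronecker_mem_unitary hA hB) (kronecker_mem_unitary hC hD)
  have hstate : ((A ⊗ₖ B) * ρAB * (A ⊗ₖ B)ᴴ) ⊗ₖ ((C ⊗ₖ D) * ρCD * (C ⊗ₖ D)ᴴ) =
      (A ⊗ₖ B) ⊗ₖ (C ⊗ₖ D) * (ρAB ⊗ₖ ρCD) * ((A ⊗ₖ B) ⊗ₖ (C ⊗ₖ D))ᴴ := by
    rw [mul_kronecker_mul, mul_kronecker_mul, ← conjTranspose_kronecker]
  rintro r ⟨w, hw, hfix, rfl⟩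
  refine ⟨fun h => (B ⊗ₖ C) *ᵥ w h, hw.unitary_mulVec (kronecker_mem_unitary hB hC), ?_, ?_⟩
  · rw [redB_kronecker_redC_conj hA hD]
    exact hfix.unitary_conj (kronecker_mem_unitary hB hC)
  · rw [hstate, psdSqrt_unitary_conj hW, pinchBC_kronecker_conj hA hB hC hD, ← sub_mul, ← mul_sub,
      hsNormSq_unitary_conj hW]

lemma star_kronecker_conj_kronecker_conj (hA : A ∈ unitaryGroup (Fin m) ℂ)
    (hB : B ∈ unitaryGroup (Fin n) ℂ) (ρ : Matrix (Fin m × Fin n) (Fin m × Fin n) ℂ) :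
    (star A ⊗ₖ star B) * ((A ⊗ₖ B) * ρ * (A ⊗ₖ B)ᴴ) * (star A ⊗ₖ star B)ᴴ = ρ := by
  have hAB : (A ⊗ₖ B)ᴴ * (A ⊗ₖ B) = 1 := (kronecker_mem_unitary hA hB).1
  rw [star_eq_conjTranspose, star_eq_conjTranspose, ← conjTranspose_kronecker,
    conjTranspose_conjTranspose]
  simp only [← mul_assoc, hAB, one_mul]
  simp only [mul_assoc, hAB, mul_one]

lemma NHbValues_kronecker_conj (hA : A ∈ unitaryGroup (Fin m) ℂ)
    (hB : B ∈ unitaryGroup (Fin n) ℂ) (hC : C ∈ unitaryGroup (Fin u) ℂ)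
    (hD : D ∈ unitaryGroup (Fin v) ℂ) (ρAB : Matrix (Fin m × Fin n) (Fin m × Fin n) ℂ)
    (ρCD : Matrix (Fin u × Fin v) (Fin u × Fin v) ℂ) :
    NHbValues ((A ⊗ₖ B) * ρAB * (A ⊗ₖ B)ᴴ) ((C ⊗ₖ D) * ρCD * (C ⊗ₖ D)ᴴ) =
      NHbValues ρAB ρCD := by
  refine subset_antisymm ?_ (NHbValues_subset_kronecker_conj hA hB hC hD ρAB ρCD)
  have h := NHbValues_subset_kronecker_conj (Unitary.star_mem hA)
    (Unitary.star_mem hB) (Unitary.star_mem hC) (Unitary.star_mem hD)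
    ((A ⊗ₖ B) * ρAB * (A ⊗ₖ B)ᴴ) ((C ⊗ₖ D) * ρCD * (C ⊗ₖ D)ᴴ)
  rwa [star_kronecker_conj_kronecker_conj hA hB,
    star_kronecker_conj_kronecker_conj hC hD] at h

end LocalUnitary

theorem stmt6_general {m n u v : ℕ}
    (ρAB : Matrix (Fin m × Fin n) (Fin m × Fin n) ℂ)
    (ρCD : Matrix (Fin u × Fin v) (Fin u × Fin v) ℂ)
    (UA : Matrix (Fin m) (Fin m) ℂ) (UB : Matrix (Fin n) (Fin n) ℂ)
    (UC : Matrix (Fin u) (Fin u) ℂ) (UD : Matrix (Fin v) (Fin v) ℂ)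
    (hUA : UA * UAᴴ = 1) (hUB : UB * UBᴴ = 1) (hUC : UC * UCᴴ = 1) (hUD : UD * UDᴴ = 1) :
    NHb ((UA ⊗ₖ UB) * ρAB * (UA ⊗ₖ UB)ᴴ) ((UC ⊗ₖ UD) * ρCD * (UC ⊗ₖ UD)ᴴ) =
      NHb ρAB ρCD :=
  congrArg sSup <| NHbValues_kronecker_conj (mem_unitaryGroup_iff.2 hUA)
    (mem_unitaryGroup_iff.2 hUB) (mem_unitaryGroup_iff.2 hUC) (mem_unitaryGroup_iff.2 hUD) ρAB ρCD

/-- Local unitary invariance of the nonbilocality quantifier. -/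
theorem stmt6 {m n u v : ℕ}
    (ρAB : Matrix (Fin m × Fin n) (Fin m × Fin n) ℂ)
    (ρCD : Matrix (Fin u × Fin v) (Fin u × Fin v) ℂ)
    (hAB : IsDensity ρAB) (hCD : IsDensity ρCD)
    (UA : Matrix (Fin m) (Fin m) ℂ) (UB : Matrix (Fin n) (Fin n) ℂ)
    (UC : Matrix (Fin u) (Fin u) ℂ) (UD : Matrix (Fin v) (Fin v) ℂ)
    (hUA : UA * UAᴴ = 1) (hUA' : UAᴴ * UA = 1)
    (hUB : UB * UBᴴ = 1) (hUB' : UBᴴ * UB = 1)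
    (hUC : UC * UCᴴ = 1) (hUC' : UCᴴ * UC = 1)
    (hUD : UD * UDᴴ = 1) (hUD' : UDᴴ * UD = 1) :
    NHb ((UA ⊗ₖ UB) * ρAB * (UA ⊗ₖ UB)ᴴ) ((UC ⊗ₖ UD) * ρCD * (UC ⊗ₖ UD)ᴴ) =
      NHb ρAB ρCD :=
  stmt6_general ρAB ρCD UA UB UC UD hUA hUB hUC hUD
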